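/- Let A : ℝ → ℝ be differentiable with A'(z) ≥ η > 0 and let f be Lipschitz with constant M. Let ε > 0 and let sign_ε be the regularized sign function, which is C¹ on ℝ with |sign_ε'| ≤ π/(2ε) and supported (as a derivative) in [−ε, ε]. Then for all u, c ∈ ℝ, |∫_c^u (d/dz)[sign_ε(A(z) − A(c))] · (f(z) − f(c)) dz| ≤ C·M·ε/η for an absolute constant C. -/

import Mathlib

noncomputable def sgn (σ : ℝ) : ℝ := if σ < 0 then -1 else if σ = 0 then 0 else 1

noncomputable def signEps (ε σ : ℝ) : ℝ :=
  if ε < |σ| then sgn σ else Real.sin (Real.pi * σ / (2 * ε))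

/-!
Write `G z = signEps ε (A z - A c)`. Then `G' = signEps' (A - A c) · A' ≥ 0`, and `G'` vanishes
unless `|A z - A c| < ε`, which by `A' ≥ η` forces `|z - c| < ε / η`, hence `|f z - f c| ≤ M ε / η`.
So the integrand is bounded by `G' · M ε / η`, whose integral is `(G u - G c) · M ε / η`, and
`|G u - G c| ≤ 2` since `|signEps| ≤ 1`.
-/

open Filter Topology Set Real intervalIntegral MeasureTheory

noncomputable def signEpsDeriv (ε σ : ℝ) : ℝ :=
  if ε ≤ |σ| then 0 else π / (2 * ε) * cos (π * σ / (2 * ε))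

lemma hasDerivAt_of_eventuallyEq_nhdsLE_nhdsGE {f g k : ℝ → ℝ} {x d : ℝ}
    (hg : HasDerivAt g d x) (hk : HasDerivAt k d x)
    (hfg : f =ᶠ[𝓝[≤] x] g) (hfk : f =ᶠ[𝓝[≥] x] k) : HasDerivAt f d x := by
  have hleft := hg.hasDerivWithinAt.congr_of_eventuallyEq hfg (hfg.eq_of_nhdsWithin self_mem_Iic)
  have hright := hk.hasDerivWithinAt.congr_of_eventuallyEq hfk (hfk.eq_of_nhdsWithin self_mem_Ici)
  simpa only [Iic_union_Ici, hasDerivWithinAt_univ] using hleft.union hright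

lemma hasDerivAt_sin_pi_mul_div (ε σ : ℝ) :
    HasDerivAt (fun x => sin (π * x / (2 * ε))) (π / (2 * ε) * cos (π * σ / (2 * ε))) σ := by
  have hlin : HasDerivAt (fun x : ℝ => π * x / (2 * ε)) (π / (2 * ε)) σ := by
    simpa using ((hasDerivAt_id σ).const_mul π).div_const (2 * ε)
  simpa [mul_comm, Function.comp_def] using (hasDerivAt_sin _).comp σ hlin

lemma mul_abs_sub_le_abs_sub_of_le_deriv {A : ℝ → ℝ} {η : ℝ} (hA : Differentiable ℝ A)
    (hη : ∀ z, η ≤ deriv A z) (x y : ℝ) : η * |x - y| ≤ |A x - A y| := by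
  rcases le_total y x with h | h
  · rw [abs_of_nonneg (sub_nonneg.2 h)]
    exact (mul_sub_le_image_sub_of_le_deriv hA hη h).trans (le_abs_self _)
  · rw [abs_sub_comm, abs_sub_comm (A x), abs_of_nonneg (sub_nonneg.2 h)]
    exact (mul_sub_le_image_sub_of_le_deriv hA hη h).trans (le_abs_self _)

lemma abs_sub_le_of_abs_image_sub_le {A f : ℝ → ℝ} {η M ε : ℝ} (hη : 0 < η) (hM : 0 ≤ M)
    (hA : Differentiable ℝ A) (hA' : ∀ z, η ≤ deriv A z) (hf : ∀ x y, |f x - f y| ≤ M * |x - y|)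
    {z c : ℝ} (h : |A z - A c| ≤ ε) : |f z - f c| ≤ M * ε / η := by
  have hzc : |z - c| ≤ ε / η := by
    rw [le_div_iff₀ hη, mul_comm]
    exact (mul_abs_sub_le_abs_sub_of_le_deriv hA hA' z c).trans h
  calc |f z - f c| ≤ M * |z - c| := hf z c
    _ ≤ M * (ε / η) := mul_le_mul_of_nonneg_left hzc hM
    _ = M * ε / η := (mul_div_assoc _ _ _).symm

section IntegralBound

variable {G h : ℝ → ℝ} {K : ℝ}

lemma abs_integral_deriv_mul_le_of_le {a b : ℝ} (hab : a ≤ b) (hG : Differentiable ℝ G)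
    (hG' : ∀ x, 0 ≤ deriv G x) (hh : Continuous h) (hbound : ∀ x, deriv G x ≠ 0 → |h x| ≤ K) :
    |∫ x in a..b, deriv G x * h x| ≤ K * (G b - G a) := by
  have hpoint : ∀ x, |deriv G x * h x| ≤ deriv G x * K := by
    intro x
    rw [abs_mul, abs_of_nonneg (hG' x)]
    by_cases hx : deriv G x = 0
    · simp [hx]
    · exact mul_le_mul_of_nonneg_left (hbound x hx) (hG' x)
  have hG'_int : IntervalIntegrable (deriv G) volume a b :=
    intervalIntegrable_deriv_of_nonneg hG.continuous.continuousOn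
      (fun x _ => (hG x).hasDerivAt) (fun x _ => hG' x)
  have hint : IntervalIntegrable (fun x => deriv G x * h x) volume a b :=
    (hG'_int.mul_const K).mono_fun
      ((measurable_deriv G).aestronglyMeasurable.mul hh.aestronglyMeasurable)
      (Eventually.of_forall fun x => by simpa using (hpoint x).trans (le_abs_self _))
  calc |∫ x in a..b, deriv G x * h x|
      ≤ ∫ x in a..b, |deriv G x * h x| := abs_integral_le_integral_abs hab
    _ ≤ ∫ x in a..b, deriv G x * K :=
        integral_mono_on hab hint.abs (hG'_int.mul_const K) fun x _ => hpoint x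
    _ = K * (G b - G a) := by
        rw [intervalIntegral.integral_mul_const,
          integral_deriv_eq_sub (fun x _ => hG x) hG'_int, mul_comm]

lemma abs_integral_deriv_mul_le (a b : ℝ) (hG : Differentiable ℝ G)
    (hG' : ∀ x, 0 ≤ deriv G x) (hh : Continuous h) (hbound : ∀ x, deriv G x ≠ 0 → |h x| ≤ K)
    (hK : 0 ≤ K) : |∫ x in a..b, deriv G x * h x| ≤ K * |G b - G a| := by
  rcases le_total a b with hab | hba
  · exact (abs_integral_deriv_mul_le_of_le hab hG hG' hh hbound).trans
      (mul_le_mul_of_nonneg_left (le_abs_self _) hK)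
  · rw [integral_symm, abs_neg, abs_sub_comm]
    exact (abs_integral_deriv_mul_le_of_le hba hG hG' hh hbound).trans
      (mul_le_mul_of_nonneg_left (le_abs_self _) hK)

end IntegralBound

section SignEps

variable {ε : ℝ}

lemma signEps_of_le (hε : 0 < ε) {σ : ℝ} (h : ε ≤ σ) : signEps ε σ = 1 := by
  rcases h.lt_or_eq with h | rfl
  · have hσ : 0 < σ := hε.trans h
    simp [signEps, sgn, abs_of_pos hσ, h, hσ.not_gt, hσ.ne']
  · rw [signEps, if_neg (abs_of_pos hε).le.not_gt, mul_div_mul_comm, div_self hε.ne',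
      mul_one, sin_pi_div_two]

lemma signEps_of_le_neg (hε : 0 < ε) {σ : ℝ} (h : σ ≤ -ε) : signEps ε σ = -1 := by
  rcases h.lt_or_eq with h | rfl
  · have hσ : σ < 0 := h.trans (neg_neg_of_pos hε)
    simp [signEps, sgn, abs_of_neg hσ, hσ, lt_neg.1 h]
  · rw [signEps, abs_neg, if_neg (abs_of_pos hε).le.not_gt, mul_neg, neg_div, mul_div_mul_comm,
      div_self hε.ne', mul_one, sin_neg, sin_pi_div_two]

lemma signEps_of_abs_le {σ : ℝ} (h : |σ| ≤ ε) : signEps ε σ = sin (π * σ / (2 * ε)) := by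
  rw [signEps, if_neg h.not_gt]

lemma abs_signEps_le_one (ε σ : ℝ) : |signEps ε σ| ≤ 1 := by
  unfold signEps sgn
  split_ifs <;> simp [abs_sin_le_one]

lemma abs_sub_signEps_le_two (ε σ τ : ℝ) : |signEps ε σ - signEps ε τ| ≤ 2 := by
  linarith [abs_sub (signEps ε σ) (signEps ε τ), abs_signEps_le_one ε σ, abs_signEps_le_one ε τ]

lemma signEpsDeriv_nonneg (hε : 0 < ε) (σ : ℝ) : 0 ≤ signEpsDeriv ε σ := by
  unfold signEpsDeriv
  split_ifs with h
  · exact le_rfl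
  · obtain ⟨h₁, h₂⟩ := abs_lt.1 (not_le.1 h)
    refine mul_nonneg (by positivity) (cos_nonneg_of_mem_Icc ⟨?_, ?_⟩)
    · rw [le_div_iff₀ (by positivity)]
      nlinarith [pi_pos]
    · rw [div_le_iff₀ (by positivity)]
      nlinarith [pi_pos]

lemma abs_lt_of_signEpsDeriv_ne_zero {σ : ℝ} (h : signEpsDeriv ε σ ≠ 0) : |σ| < ε := by
  by_contra! hσ
  exact h (if_pos hσ)

lemma hasDerivAt_signEps (hε : 0 < ε) (σ : ℝ) : HasDerivAt (signEps ε) (signEpsDeriv ε σ) σ := by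
  rcases lt_or_ge ε |σ| with hout | hin
  · rw [signEpsDeriv, if_pos hout.le]
    rcases lt_abs.1 hout with h | h
    · exact (hasDerivAt_const σ 1).congr_of_eventuallyEq <|
        (eventually_gt_nhds h).mono fun x hx => signEps_of_le hε hx.le
    · exact (hasDerivAt_const σ (-1)).congr_of_eventuallyEq <|
        (eventually_lt_nhds (lt_neg.1 h)).mono fun x hx => signEps_of_le_neg hε hx.le
  rcases hin.lt_or_eq with hin | hbdry
  · rw [signEpsDeriv, if_neg hin.not_ge]
    exact (hasDerivAt_sin_pi_mul_div ε σ).congr_of_eventuallyEq <|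
      ((continuous_abs.tendsto σ).eventually (eventually_lt_nhds hin)).mono
        fun x hx => signEps_of_abs_le hx.le
  rw [signEpsDeriv, if_pos hbdry.ge]
  -- at `σ = ±ε` the sine branch has slope `π / (2ε) · cos (± π / 2) = 0`, matching the constants
  rcases (abs_eq hε.le).1 hbdry with rfl | rfl
  · have hsin := hasDerivAt_sin_pi_mul_div σ σ
    rw [mul_div_mul_comm, div_self hε.ne', mul_one, cos_pi_div_two, mul_zero] at hsin
    refine hasDerivAt_of_eventuallyEq_nhdsLE_nhdsGE hsin (hasDerivAt_const σ 1) ?_ ?_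
    · filter_upwards [Ioc_mem_nhdsLE (neg_lt_self hε)] with x hx
      exact signEps_of_abs_le (abs_le.2 ⟨hx.1.le, hx.2⟩)
    · filter_upwards [self_mem_nhdsWithin] with x hx using signEps_of_le hε hx
  · have hsin := hasDerivAt_sin_pi_mul_div ε (-ε)
    rw [mul_neg, neg_div, mul_div_mul_comm, div_self hε.ne', mul_one, cos_neg, cos_pi_div_two,
      mul_zero] at hsin
    refine hasDerivAt_of_eventuallyEq_nhdsLE_nhdsGE (hasDerivAt_const (-ε) (-1)) hsin ?_ ?_
    · filter_upwards [self_mem_nhdsWithin] with x hx using signEps_of_le_neg hε hx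
    · filter_upwards [Ico_mem_nhdsGE (neg_lt_self hε)] with x hx
      exact signEps_of_abs_le (abs_le.2 ⟨hx.1, hx.2.le⟩)

end SignEps

theorem stmt4 :
    ∃ C > (0 : ℝ), ∀ (A f : ℝ → ℝ) (η M ε : ℝ), 0 < η → 0 < ε → 0 ≤ M →
      Differentiable ℝ A → (∀ z, η ≤ deriv A z) →
      (∀ x y : ℝ, |f x - f y| ≤ M * |x - y|) →
      ∀ u c : ℝ,
        |∫ z in c..u, deriv (fun z => signEps ε (A z - A c)) z * (f z - f c)| ≤
          C * M * ε / η := by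
  refine ⟨2, two_pos, fun A f η M ε hη hε hM hA hA' hf u c => ?_⟩
  set G : ℝ → ℝ := fun z => signEps ε (A z - A c)
  have hG : ∀ z, HasDerivAt G (signEpsDeriv ε (A z - A c) * deriv A z) z := fun z =>
    (hasDerivAt_signEps hε _).comp z ((hA z).hasDerivAt.sub_const _)
  have hG' : ∀ z, 0 ≤ deriv G z := fun z => (hG z).deriv ▸
    mul_nonneg (signEpsDeriv_nonneg hε _) (hη.le.trans (hA' z))
  have hf_local : ∀ z, deriv G z ≠ 0 → |f z - f c| ≤ M * ε / η := fun z hz =>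
    abs_sub_le_of_abs_image_sub_le hη hM hA hA' hf
      (abs_lt_of_signEpsDeriv_ne_zero (left_ne_zero_of_mul ((hG z).deriv ▸ hz))).le
  calc _ ≤ M * ε / η * |G u - G c| :=
        abs_integral_deriv_mul_le c u (fun z => (hG z).differentiableAt) hG'
          ((LipschitzWith.of_dist_le' hf).continuous.sub continuous_const) hf_local
          (by positivity)
    _ ≤ M * ε / η * 2 := mul_le_mul_of_nonneg_left (abs_sub_signEps_le_two ..) (by positivity)
    _ = 2 * M * ε / η := by ring
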